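/- Let X, X', Y be independent, X and X' with density f and distribution function F, and Y with density f(·−θ); let k be a kernel symmetric about the origin with ∫ k = 1, ∫ t^2|k(t)|dt < ∞, and K(t) = ∫_{-∞}^t k(u)du. If f is continuously differentiable with bounded derivative, then as h → 0, E[ K((X−Y)/h) K((X'−Y)/h) ] = ∫_{-∞}^∞ (1−F(y))^2 f(y−θ) dy + O(h^2). -/

import Mathlib

open MeasureTheory ProbabilityTheory Filter Asymptotics Set
open scoped Topology ENNReal NNReal BigOperators

noncomputable section

/-- The `k`-th order statistic (1-indexed) of a finite sample: the smallest point `x`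
such that at least `k` of the observations are `≤ x`. -/
def orderStat {N : ℕ} (w : Fin N → ℝ) (k : ℕ) : ℝ :=
  sInf {x : ℝ | k ≤ (Finset.univ.filter fun i => w i ≤ x).card}

/-- The sample median: the `((N+1)/2)`-th order statistic for odd `N`, the average of the
`(N/2)`-th and `(N/2+1)`-th order statistics for even `N`. -/
def sampleMedian {N : ℕ} (w : Fin N → ℝ) : ℝ :=
  if N % 2 = 1 then orderStat w ((N + 1) / 2)
  else (orderStat w (N / 2) + orderStat w (N / 2 + 1)) / 2

/-- The measure on `ℝ` with Lebesgue density `f`. -/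
def densMeasure (f : ℝ → ℝ) : Measure ℝ :=
  MeasureTheory.volume.withDensity fun x => ENNReal.ofReal (f x)

/-- Joint law of the two independent samples: `X_1, …, X_m` i.i.d. with density `f`
and `Y_1, …, Y_n` i.i.d. with density `f(· - θ)`, all independent. -/
def twoSampleLaw (f : ℝ → ℝ) (m n : ℕ) (θ : ℝ) :
    Measure ((Fin m → ℝ) × (Fin n → ℝ)) :=
  (Measure.pi fun _ : Fin m => densMeasure f).prod
    (Measure.pi fun _ : Fin n => (densMeasure f).map (· + θ))

/-- Integrated kernel `K(t) = ∫_{-∞}^t k(u) du`. -/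
def Kfun (k : ℝ → ℝ) (t : ℝ) : ℝ := ∫ u in Set.Iic t, k u

/-- The median test statistic `M† = ∑_{i=1}^m ψ*(Z - X_i)` with `ψ*(x) = 1` for `x > 0`. -/
def MdagStat {m n : ℕ} (p : (Fin m → ℝ) × (Fin n → ℝ)) : ℝ :=
  ∑ i : Fin m, if 0 < sampleMedian (Fin.append p.1 p.2) - p.1 i then (1:ℝ) else 0

/-- The smoothed median test statistic `M̃ = ∑_{i=1}^m K*((Z - X_i)/h)`. -/
def MtilStat (kstar : ℝ → ℝ) (h : ℝ) {m n : ℕ} (p : (Fin m → ℝ) × (Fin n → ℝ)) : ℝ :=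
  ∑ i : Fin m, Kfun kstar ((sampleMedian (Fin.append p.1 p.2) - p.1 i) / h)

/-- The Wilcoxon rank sum statistic `W₂ = ∑_i ∑_j ψ(Y_j - X_i)` with `ψ(x) = 1` for `x ≥ 0`. -/
def W2Stat {m n : ℕ} (p : (Fin m → ℝ) × (Fin n → ℝ)) : ℝ :=
  ∑ i : Fin m, ∑ j : Fin n, if 0 ≤ p.2 j - p.1 i then (1:ℝ) else 0

/-- The smoothed Wilcoxon statistic `W̃₂ = ∑_i ∑_j K((Y_j - X_i)/h)`. -/
def WtilStat (k : ℝ → ℝ) (h : ℝ) {m n : ℕ} (p : (Fin m → ℝ) × (Fin n → ℝ)) : ℝ :=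
  ∑ i : Fin m, ∑ j : Fin n, Kfun k ((p.2 j - p.1 i) / h)

/-- The standard normal distribution function `Φ`. -/
def stdGaussCDF (x : ℝ) : ℝ :=
  ((ProbabilityTheory.gaussianReal 0 1) (Set.Iic x)).toReal

/-- The Beta function `B(a,b) = ∫_0^1 t^{a-1} (1-t)^{b-1} dt`. -/
def Beta (a b : ℝ) : ℝ := ∫ t in Set.Ioo (0:ℝ) 1, t ^ (a - 1) * (1 - t) ^ (b - 1)


/-!
Given `Y = y`, the variables `X` and `X'` are independent, so the expectation is
`∫ G_h(y)² dν(y)` with `G_h(y) = E K((X - y)/h)`. Fubini writes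
`G_h(y) = ∫ k(u) (1 - F(y + hu)) du`; since `k` is even, the first-order Taylor term of `F`
integrates to zero, leaving `|G_h(y) - (1 - F(y))| ≤ C h² ∫ u² |k(u)| du` with `C` a bound for
`f'`. As `|G_h| ≤ ∫ |k|` and `0 ≤ 1 - F ≤ 1`, the squares differ by `O(h²)` uniformly in `y`.
-/

section Kernel

variable {k : ℝ → ℝ}

theorem continuous_Kfun (hk : Integrable k) : Continuous (Kfun k) := by
  have hprim : Kfun k = fun t => (∫ u in Iic 0, k u) + ∫ u in (0 : ℝ)..t, k u := by
    funext t
    rw [Kfun, ← intervalIntegral.integral_Iic_sub_Iic hk.integrableOn hk.integrableOn]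
    ring
  rw [hprim]
  exact continuous_const.add (hk.continuous_primitive 0)

theorem abs_Kfun_le (hk : Integrable k) (t : ℝ) : |Kfun k t| ≤ ∫ u, |k u| :=
  abs_integral_le_integral_abs.trans
    (setIntegral_le_integral hk.abs (.of_forall fun _ => abs_nonneg _))

theorem integral_mul_eq_zero_of_even (hk : ∀ t, k (-t) = k t) : ∫ u, u * k u = 0 := by
  have hodd : ∫ u, u * k u = -∫ u, u * k u := by
    conv_lhs => rw [← integral_neg_eq_self]
    simp only [hk, neg_mul, integral_neg]
  linarith

theorem integrable_mul_of_integrable_sq_mul_abs (hk : Integrable k)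
    (hk2 : Integrable fun t => t ^ 2 * |k t|) : Integrable fun t => t * k t := by
  refine (hk.abs.add hk2).mono' (aestronglyMeasurable_id.mul hk.aestronglyMeasurable)
    (.of_forall fun t => ?_)
  rw [Real.norm_eq_abs, abs_mul]
  have ht : |t| ≤ 1 + t ^ 2 := by nlinarith [sq_nonneg (|t| - 1), sq_abs t]
  show |t| * |k t| ≤ |k t| + t ^ 2 * |k t|
  nlinarith [abs_nonneg (k t)]

theorem integral_Kfun_div_eq {μ : Measure ℝ} [IsFiniteMeasure μ] (hk : Integrable k) {h : ℝ}
    (hh : 0 < h) (y : ℝ) :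
    ∫ x, Kfun k ((x - y) / h) ∂μ = ∫ u, k u * μ.real (Ici (y + h * u)) := by
  have hmem : ∀ x u, u ∈ Iic ((x - y) / h) ↔ x ∈ Ici (y + h * u) := fun x u => by
    rw [mem_Iic, mem_Ici, le_div_iff₀ hh]
    constructor <;> intro <;> linarith
  have hint : Integrable (Function.uncurry fun x u => (Iic ((x - y) / h)).indicator k u)
      (μ.prod volume) := by
    have hS : MeasurableSet {p : ℝ × ℝ | p.2 ≤ (p.1 - y) / h} :=
      (isClosed_le continuous_snd (by fun_prop)).measurableSet
    exact ((hk.comp_snd μ).indicator hS).congr (.of_forall fun p => rfl)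
  calc ∫ x, Kfun k ((x - y) / h) ∂μ
      = ∫ x, (∫ u, (Iic ((x - y) / h)).indicator k u) ∂μ := by
        simp only [Kfun, integral_indicator measurableSet_Iic]
    _ = ∫ u, ∫ x, (Iic ((x - y) / h)).indicator k u ∂μ := integral_integral_swap hint
    _ = ∫ u, k u * μ.real (Ici (y + h * u)) := by
        congr with u
        have hind : (fun x => (Iic ((x - y) / h)).indicator k u)
            = (Ici (y + h * u)).indicator fun _ => k u := by
          funext x
          simp only [indicator_apply, hmem]
        rw [hind, integral_indicator_const _ measurableSet_Ici, smul_eq_mul, mul_comm]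

/-- The first-order Taylor term of `g` integrates to zero against the even kernel `k`. -/
theorem abs_integral_mul_comp_sub_le (hksym : ∀ t, k (-t) = k t) (hk : Integrable k)
    (hk1 : ∫ t, k t = 1) (hk2 : Integrable fun t => t ^ 2 * |k t|) {g : ℝ → ℝ}
    (hg : Continuous g) {y d C : ℝ} (hgy : ∀ s, |g (y + s) - g y - s * d| ≤ C * s ^ 2)
    (h : ℝ) : |(∫ u, k u * g (y + h * u)) - g y| ≤ C * (∫ u, u ^ 2 * |k u|) * h ^ 2 := by
  set r : ℝ → ℝ := fun u => k u * (g (y + h * u) - g y - h * u * d)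
  have hr : ∀ u, ‖r u‖ ≤ C * h ^ 2 * (u ^ 2 * |k u|) := fun u => by
    calc ‖r u‖ = |k u| * |g (y + h * u) - g y - h * u * d| := abs_mul _ _
      _ ≤ |k u| * (C * (h * u) ^ 2) := by gcongr; exact hgy (h * u)
      _ = C * h ^ 2 * (u ^ 2 * |k u|) := by ring
  have hr_int : Integrable r :=
    (hk2.const_mul _).mono'
      (hk.aestronglyMeasurable.mul (by fun_prop : Continuous _).aestronglyMeasurable)
      (.of_forall hr)
  have huk := integrable_mul_of_integrable_sq_mul_abs hk hk2
  have hsplit : ∫ u, k u * g (y + h * u) = (∫ u, r u) + g y := by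
    have hfun : (fun u => k u * g (y + h * u))
        = fun u => r u + (g y * k u + d * h * (u * k u)) := by
      funext u
      simp only [r]
      ring
    have hmain : Integrable fun u => g y * k u + d * h * (u * k u) :=
      (hk.const_mul _).add (huk.const_mul _)
    rw [hfun, integral_add hr_int hmain,
      integral_add (hk.const_mul _) (huk.const_mul _), integral_const_mul, integral_const_mul,
      hk1, integral_mul_eq_zero_of_even hksym]
    ring
  rw [hsplit, add_sub_cancel_right, ← Real.norm_eq_abs]
  calc ‖∫ u, r u‖ ≤ ∫ u, C * h ^ 2 * (u ^ 2 * |k u|) :=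
        norm_integral_le_of_norm_le (hk2.const_mul _) (.of_forall hr)
    _ = C * (∫ u, u ^ 2 * |k u|) * h ^ 2 := by rw [integral_const_mul]; ring

end Kernel

theorem abs_intervalIntegral_sub_mul_le {f : ℝ → ℝ} {C : ℝ≥0} (hf : LipschitzWith C f)
    (y s : ℝ) : |(∫ t in y..y + s, f t) - s * f y| ≤ C * s ^ 2 := by
  have hbound : ∀ t ∈ uIoc y (y + s), ‖f t - f y‖ ≤ C * |s| := fun t ht => by
    calc ‖f t - f y‖ = dist (f t) (f y) := (Real.dist_eq _ _).symm
      _ ≤ C * dist t y := hf.dist_le_mul t y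
      _ ≤ C * |s| := by
        gcongr
        simpa [Real.dist_eq] using abs_sub_left_of_mem_uIcc (uIoc_subset_uIcc ht)
  calc |(∫ t in y..y + s, f t) - s * f y| = ‖∫ t in y..y + s, (f t - f y)‖ := by
        rw [intervalIntegral.integral_sub (hf.continuous.intervalIntegrable _ _)
          intervalIntegrable_const, intervalIntegral.integral_const, smul_eq_mul,
          add_sub_cancel_left, Real.norm_eq_abs]
    _ ≤ C * |s| * |y + s - y| := intervalIntegral.norm_integral_le_of_norm_le_const hbound
    _ = C * s ^ 2 := by rw [add_sub_cancel_left, mul_assoc, abs_mul_abs_self, sq]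

section densMeasure

variable {f : ℝ → ℝ}

theorem isProbabilityMeasure_densMeasure (hf0 : ∀ x, 0 ≤ f x) (hfi : ∫ x, f x = 1) :
    IsProbabilityMeasure (densMeasure f) := by
  constructor
  rw [densMeasure, withDensity_apply _ MeasurableSet.univ, Measure.restrict_univ,
    ← ofReal_integral_eq_lintegral_ofReal (.of_integral_ne_zero (by simp [hfi]))
      (.of_forall hf0), hfi, ENNReal.ofReal_one]

theorem integral_densMeasure (hf : Measurable f) (hf0 : ∀ x, 0 ≤ f x) (g : ℝ → ℝ) :
    ∫ x, g x ∂densMeasure f = ∫ x, f x * g x := by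
  rw [densMeasure, integral_withDensity_eq_integral_toReal_smul hf.ennreal_ofReal
    (.of_forall fun _ => ENNReal.ofReal_lt_top)]
  congr with x
  rw [ENNReal.toReal_ofReal (hf0 x), smul_eq_mul]

theorem densMeasure_real_Ici (hf : Measurable f) (hf0 : ∀ x, 0 ≤ f x) (hfi : ∫ x, f x = 1)
    (a : ℝ) : (densMeasure f).real (Ici a) = 1 - ∫ t in Iic a, f t := by
  have hIci : ∫ x, f x * (Ici a).indicator 1 x = ∫ x in Ioi a, f x := by
    rw [← integral_Ici_eq_integral_Ioi, ← integral_indicator measurableSet_Ici]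
    congr with x
    simp only [indicator_apply, Pi.one_apply, mul_ite, mul_one, mul_zero]
  have hsplit := integral_add_compl (measurableSet_Iic (a := a))
    (.of_integral_ne_zero (by simp [hfi]) : Integrable f)
  rw [compl_Iic, hfi] at hsplit
  rw [← integral_indicator_one measurableSet_Ici, integral_densMeasure hf hf0, hIci]
  linarith

theorem integral_map_add_densMeasure (hf : Measurable f) (hf0 : ∀ x, 0 ≤ f x) (θ : ℝ)
    (g : ℝ → ℝ) : ∫ y, g y ∂(densMeasure f).map (· + θ) = ∫ y, g y * f (y - θ) := by
  rw [show (· + θ) = ⇑(MeasurableEquiv.addRight θ) from rfl,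
    (MeasurableEquiv.addRight θ).measurableEmbedding.integral_map, integral_densMeasure hf hf0]
  conv_rhs => rw [← integral_add_right_eq_self _ θ]
  simp [mul_comm]

end densMeasure

theorem abs_integral_Kfun_le {k : ℝ → ℝ} (hk : Integrable k) {μ : Measure ℝ}
    [IsProbabilityMeasure μ] (φ : ℝ → ℝ) : |∫ x, Kfun k (φ x) ∂μ| ≤ ∫ u, |k u| := by
  simpa using norm_integral_le_of_norm_le_const (μ := μ) (f := fun x => Kfun k (φ x))
    (.of_forall fun x => abs_Kfun_le hk _)

theorem abs_integral_Kfun_div_sub_le {f F : ℝ → ℝ} (hf0 : ∀ x, 0 ≤ f x) (hfi : ∫ x, f x = 1)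
    (hF : ∀ x, F x = ∫ t in Iic x, f t) {C : ℝ≥0} (hlip : LipschitzWith C f) {k : ℝ → ℝ}
    (hksym : ∀ t, k (-t) = k t) (hk : Integrable k) (hk1 : ∫ t, k t = 1)
    (hk2 : Integrable fun t => t ^ 2 * |k t|) {h : ℝ} (hh : 0 < h) (y : ℝ) :
    |(∫ x, Kfun k ((x - y) / h) ∂densMeasure f) - (1 - F y)|
      ≤ C * (∫ u, u ^ 2 * |k u|) * h ^ 2 := by
  have hfint : Integrable f := .of_integral_ne_zero (by simp [hfi])
  have := isProbabilityMeasure_densMeasure hf0 hfi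
  have hFc : Continuous F := funext hF ▸ continuous_Kfun hfint
  simp only [integral_Kfun_div_eq hk hh, densMeasure_real_Ici hlip.continuous.measurable hf0 hfi,
    ← hF]
  refine abs_integral_mul_comp_sub_le hksym hk hk1 hk2 (continuous_const.sub hFc)
    (g := fun x => 1 - F x) (d := -f y) (fun s => ?_) h
  rw [show 1 - F (y + s) - (1 - F y) - s * -f y = -(F (y + s) - F y - s * f y) by ring,
    abs_neg, hF, hF, intervalIntegral.integral_Iic_sub_Iic hfint.integrableOn hfint.integrableOn]
  exact abs_intervalIntegral_sub_mul_le hlip y s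

section Square

variable {α β : Type*} [MeasurableSpace α] [MeasurableSpace β]

theorem integral_prod_prod_mul_eq_integral_sq {μ : Measure α} {ν : Measure β} [SFinite μ]
    [SFinite ν] {g : α → β → ℝ}
    (hg : Integrable (fun p : (α × α) × β => g p.1.1 p.2 * g p.1.2 p.2) ((μ.prod μ).prod ν)) :
    ∫ p, g p.1.1 p.2 * g p.1.2 p.2 ∂((μ.prod μ).prod ν) = ∫ y, (∫ x, g x y ∂μ) ^ 2 ∂ν := by
  rw [integral_prod_symm _ hg]
  congr with y
  rw [sq]
  exact integral_prod_mul (fun x => g x y) (fun x => g x y)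

theorem abs_integral_sq_sub_integral_sq_le {ν : Measure β} [IsProbabilityMeasure ν]
    {G S : β → ℝ} (hG : AEStronglyMeasurable G ν) (hS : AEStronglyMeasurable S ν)
    {ε A B : ℝ} (hGS : ∀ y, |G y - S y| ≤ ε) (hGA : ∀ y, |G y| ≤ A) (hSB : ∀ y, |S y| ≤ B) :
    |(∫ y, G y ^ 2 ∂ν) - ∫ y, S y ^ 2 ∂ν| ≤ ε * (A + B) := by
  have hsq : ∀ (T : β → ℝ) (M : ℝ), AEStronglyMeasurable T ν → (∀ y, |T y| ≤ M) →
      Integrable (fun y => T y ^ 2) ν := fun T M hT hTM =>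
    .of_bound (hT.pow 2) (M ^ 2) (.of_forall fun y => by
      rw [Real.norm_eq_abs, abs_pow]
      exact pow_le_pow_left₀ (abs_nonneg _) (hTM y) 2)
  have hpt : ∀ y, ‖G y ^ 2 - S y ^ 2‖ ≤ ε * (A + B) := fun y => by
    calc ‖G y ^ 2 - S y ^ 2‖ = |G y - S y| * |G y + S y| := by
          rw [Real.norm_eq_abs, ← abs_mul]; ring_nf
      _ ≤ ε * (A + B) :=
        mul_le_mul (hGS y) ((abs_add_le _ _).trans (add_le_add (hGA y) (hSB y)))
          (abs_nonneg _) ((abs_nonneg _).trans (hGS y))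
  rw [← integral_sub (hsq G A hG hGA) (hsq S B hS hSB), ← Real.norm_eq_abs]
  simpa using norm_integral_le_of_norm_le_const (μ := ν) (.of_forall hpt)

end Square

theorem stronglyMeasurable_integral_Kfun_div {k : ℝ → ℝ} (hk : Integrable k) (μ : Measure ℝ)
    [SFinite μ] (h : ℝ) : StronglyMeasurable fun y => ∫ x, Kfun k ((x - y) / h) ∂μ := by
  have hK := continuous_Kfun hk
  exact (by fun_prop : Continuous fun p : ℝ × ℝ => Kfun k ((p.2 - p.1) / h)).stronglyMeasurable
    |>.integral_prod_right'

theorem integral_Kfun_mul_Kfun_eq_integral_sq {k : ℝ → ℝ} (hk : Integrable k)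
    {μ ν : Measure ℝ} [IsFiniteMeasure μ] [IsFiniteMeasure ν] (h : ℝ) :
    ∫ p : (ℝ × ℝ) × ℝ, Kfun k ((p.1.1 - p.2) / h) * Kfun k ((p.1.2 - p.2) / h)
        ∂((μ.prod μ).prod ν)
      = ∫ y, (∫ x, Kfun k ((x - y) / h) ∂μ) ^ 2 ∂ν := by
  have hK := continuous_Kfun hk
  refine integral_prod_prod_mul_eq_integral_sq (g := fun x y => Kfun k ((x - y) / h)) <|
    .of_bound (by fun_prop : Continuous _).aestronglyMeasurable
      ((∫ u, |k u|) * ∫ u, |k u|) (.of_forall fun p => ?_)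
  rw [norm_mul]
  exact mul_le_mul (abs_Kfun_le hk _) (abs_Kfun_le hk _) (norm_nonneg _)
    ((abs_nonneg _).trans (abs_Kfun_le hk 0))

/-- For independent `X, X'` (density `f`) and `Y` (density `f(· - θ)`),
as `h → 0⁺`, `E[K((X-Y)/h) K((X'-Y)/h)] = ∫ (1-F(y))² f(y-θ) dy + O(h²)`. -/
theorem stmt_13
    (f : ℝ → ℝ) (hf0 : ∀ x, 0 ≤ f x) (hfi : ∫ x, f x = 1)
    (F : ℝ → ℝ) (hF : ∀ x, F x = ∫ t in Set.Iic x, f t)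
    (hfC : ContDiff ℝ 1 f) (hfd : ∃ C, ∀ x, |deriv f x| ≤ C)
    (k : ℝ → ℝ) (hksym : ∀ t, k (-t) = k t) (hkInt : Integrable k) (hk1 : ∫ t, k t = 1)
    (hk2 : Integrable fun t => t ^ 2 * |k t|) (θ : ℝ) :
    (fun h : ℝ => (∫ p : (ℝ × ℝ) × ℝ,
          Kfun k ((p.1.1 - p.2) / h) * Kfun k ((p.1.2 - p.2) / h)
          ∂(((densMeasure f).prod (densMeasure f)).prod ((densMeasure f).map (· + θ))))
        - ∫ y, (1 - F y) ^ 2 * f (y - θ)) =O[𝓝[>] (0:ℝ)] fun h : ℝ => h ^ 2 := by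
  obtain ⟨C, hC⟩ := hfd
  have hlip : LipschitzWith C.toNNReal f :=
    lipschitzWith_of_nnnorm_deriv_le (hfC.differentiable one_ne_zero) fun x => by
      rw [← NNReal.coe_le_coe, coe_nnnorm]
      exact (hC x).trans (Real.le_coe_toNNReal C)
  have hμ := isProbabilityMeasure_densMeasure hf0 hfi
  have hν : IsProbabilityMeasure ((densMeasure f).map (· + θ)) :=
    Measure.isProbabilityMeasure_map (measurable_add_const θ).aemeasurable
  have hsurv : ∀ y, (densMeasure f).real (Ici y) = 1 - F y := fun y => by
    rw [densMeasure_real_Ici hlip.continuous.measurable hf0 hfi, hF]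
  have hFc : Continuous F := funext hF ▸ continuous_Kfun (.of_integral_ne_zero (by simp [hfi]))
  rw [isBigO_iff]
  refine ⟨C.toNNReal * (∫ u, u ^ 2 * |k u|) * ((∫ u, |k u|) + 1),
    eventually_nhdsWithin_of_forall fun h (hh : 0 < h) => ?_⟩
  rw [integral_Kfun_mul_Kfun_eq_integral_sq hkInt,
    ← integral_map_add_densMeasure hlip.continuous.measurable hf0 θ (fun y => (1 - F y) ^ 2),
    Real.norm_eq_abs, Real.norm_eq_abs, abs_of_nonneg (sq_nonneg h)]
  calc _ ≤ C.toNNReal * (∫ u, u ^ 2 * |k u|) * h ^ 2 * ((∫ u, |k u|) + 1) :=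
        abs_integral_sq_sub_integral_sq_le (S := fun y => 1 - F y)
          (stronglyMeasurable_integral_Kfun_div hkInt _ h).aestronglyMeasurable
          (continuous_const.sub hFc).aestronglyMeasurable
          (abs_integral_Kfun_div_sub_le hf0 hfi hF hlip hksym hkInt hk1 hk2 hh)
          (fun y => abs_integral_Kfun_le hkInt _)
          (fun y => hsurv y ▸ (abs_of_nonneg measureReal_nonneg).trans_le measureReal_le_one)
    _ = _ := by ring
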